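/- Let I ⊆ ℝ be an open interval and G : I → ℝ a C² function with G' ≥ 0 on I. On the open set ℝ×ℝ×I one has W ≥ p ≥ 1, so p/W and q/W are C¹ there, and at every point of the graphical strip S = {(yG(t), y, t) : y ∈ ℝ, t ∈ I} the identity X1(p/W) + X2(q/W) = 0 holds; that is, every graphical strip is H-minimal (its horizontal mean curvature vanishes identically). -/

import Mathlib

/-!
The horizontal divergence of the unit field `(p, q) / W` has the closed form
`(q² X₁p − p q (X₁q + X₂p) + p² X₂q) / W³`: this is the quotient rule for `u / √(u² + v²)`
applied along each coordinate slice. For the strip one computes `X₁p = −y³G''/4`,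
`X₂p = yG' + xy²G''/4`, `X₁q = xy²G''/4`, `X₂q = −xG' − x²yG''/4`, and on `x = yG(t)` also
`q = −G p`; the numerator becomes `p² (G² X₁p + G (X₁q + X₂p) + X₂q)`, whose bracket cancels
identically. Since `G' ≥ 0` we have `p ≥ 1`, so `W > 0` and the unit field is `C¹`.
-/

noncomputable def pfun (G : ℝ → ℝ) (g : ℝ × ℝ × ℝ) : ℝ :=
  1 + g.2.1 ^ 2 / 2 * deriv G g.2.2

noncomputable def qfun (G : ℝ → ℝ) (g : ℝ × ℝ × ℝ) : ℝ :=
  -G g.2.2 - g.1 * g.2.1 / 2 * deriv G g.2.2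

noncomputable def omfun (G : ℝ → ℝ) (g : ℝ × ℝ × ℝ) : ℝ :=
  -g.2.1 * deriv G g.2.2

noncomputable def Wfun (G : ℝ → ℝ) (g : ℝ × ℝ × ℝ) : ℝ :=
  Real.sqrt (pfun G g ^ 2 + qfun G g ^ 2)

noncomputable def dX (f : ℝ × ℝ × ℝ → ℝ) (g : ℝ × ℝ × ℝ) : ℝ :=
  deriv (fun x => f (x, g.2.1, g.2.2)) g.1

noncomputable def dYc (f : ℝ × ℝ × ℝ → ℝ) (g : ℝ × ℝ × ℝ) : ℝ :=
  deriv (fun y => f (g.1, y, g.2.2)) g.2.1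

noncomputable def dT (f : ℝ × ℝ × ℝ → ℝ) (g : ℝ × ℝ × ℝ) : ℝ :=
  deriv (fun t => f (g.1, g.2.1, t)) g.2.2

noncomputable def X1op (f : ℝ × ℝ × ℝ → ℝ) (g : ℝ × ℝ × ℝ) : ℝ :=
  dX f g - g.2.1 / 2 * dT f g

noncomputable def X2op (f : ℝ × ℝ × ℝ → ℝ) (g : ℝ × ℝ × ℝ) : ℝ :=
  dYc f g + g.1 / 2 * dT f g

noncomputable def Yop (G : ℝ → ℝ) (f : ℝ × ℝ × ℝ → ℝ) (g : ℝ × ℝ × ℝ) : ℝ :=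
  (pfun G g * X1op f g + qfun G g * X2op f g) / Wfun G g

open Real Set

theorem deriv_div_sqrt_sq_add_sq {P Q : ℝ → ℝ} {s : ℝ} (hP : DifferentiableAt ℝ P s)
    (hQ : DifferentiableAt ℝ Q s) (hpos : 0 < P s ^ 2 + Q s ^ 2) :
    deriv (fun u => P u / √(P u ^ 2 + Q u ^ 2)) s
      = Q s * (deriv P s * Q s - P s * deriv Q s) / √(P s ^ 2 + Q s ^ 2) ^ 3 := by
  have hW : √(P s ^ 2 + Q s ^ 2) ≠ 0 := (sqrt_pos.2 hpos).ne'
  have hW2 : √(P s ^ 2 + Q s ^ 2) ^ 2 = P s ^ 2 + Q s ^ 2 := sq_sqrt hpos.le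
  rw [(hP.hasDerivAt.fun_div
    (((hP.hasDerivAt.fun_pow 2).fun_add (hQ.hasDerivAt.fun_pow 2)).sqrt hpos.ne') hW).deriv]
  field_simp
  rw [hW2]
  ring

theorem deriv_div_sqrt_sq_add_sq' {P Q : ℝ → ℝ} {s : ℝ} (hP : DifferentiableAt ℝ P s)
    (hQ : DifferentiableAt ℝ Q s) (hpos : 0 < P s ^ 2 + Q s ^ 2) :
    deriv (fun u => Q u / √(P u ^ 2 + Q u ^ 2)) s
      = P s * (deriv Q s * P s - Q s * deriv P s) / √(P s ^ 2 + Q s ^ 2) ^ 3 := by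
  simp only [add_comm (P _ ^ 2)]
  exact deriv_div_sqrt_sq_add_sq hQ hP (by linarith)

noncomputable def meanCurvatureNumerator (p q : ℝ × ℝ × ℝ → ℝ) (g : ℝ × ℝ × ℝ) : ℝ :=
  q g ^ 2 * X1op p g - p g * q g * (X1op q g + X2op p g) + p g ^ 2 * X2op q g

theorem X1op_add_X2op_div_sqrt {p q : ℝ × ℝ × ℝ → ℝ} {g : ℝ × ℝ × ℝ}
    (hp : DifferentiableAt ℝ p g) (hq : DifferentiableAt ℝ q g) (hpos : 0 < p g ^ 2 + q g ^ 2) :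
    X1op (fun g => p g / √(p g ^ 2 + q g ^ 2)) g + X2op (fun g => q g / √(p g ^ 2 + q g ^ 2)) g
      = meanCurvatureNumerator p q g / √(p g ^ 2 + q g ^ 2) ^ 3 := by
  obtain ⟨x, y, t⟩ := g
  have slice_x {f : ℝ × ℝ × ℝ → ℝ} (hf : DifferentiableAt ℝ f (x, y, t)) :
      DifferentiableAt ℝ (fun x' => f (x', y, t)) x := hf.comp x (by fun_prop)
  have slice_y {f : ℝ × ℝ × ℝ → ℝ} (hf : DifferentiableAt ℝ f (x, y, t)) :
      DifferentiableAt ℝ (fun y' => f (x, y', t)) y := hf.comp y (by fun_prop)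
  have slice_t {f : ℝ × ℝ × ℝ → ℝ} (hf : DifferentiableAt ℝ f (x, y, t)) :
      DifferentiableAt ℝ (fun t' => f (x, y, t')) t := hf.comp t (by fun_prop)
  simp only [meanCurvatureNumerator, X1op, X2op, dX, dYc, dT]
  rw [deriv_div_sqrt_sq_add_sq (slice_x hp) (slice_x hq) hpos,
    deriv_div_sqrt_sq_add_sq (slice_t hp) (slice_t hq) hpos,
    deriv_div_sqrt_sq_add_sq' (slice_y hp) (slice_y hq) hpos,
    deriv_div_sqrt_sq_add_sq' (slice_t hp) (slice_t hq) hpos]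
  ring

theorem ContDiffOn.div_sqrt_sq_add_sq {E : Type*} [NormedAddCommGroup E] [NormedSpace ℝ E]
    {n : WithTop ℕ∞} {r p q : E → ℝ} {s : Set E} (hr : ContDiffOn ℝ n r s)
    (hp : ContDiffOn ℝ n p s) (hq : ContDiffOn ℝ n q s) (hne : ∀ x ∈ s, p x ^ 2 + q x ^ 2 ≠ 0) :
    ContDiffOn ℝ n (fun x => r x / √(p x ^ 2 + q x ^ 2)) s :=
  hr.div (((hp.pow 2).add (hq.pow 2)).sqrt hne) fun x hx =>
    sqrt_ne_zero'.2 ((hne x hx).lt_of_le' (by positivity))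

theorem ContDiffOn.comp_snd_snd {E F : Type*} [NormedAddCommGroup E] [NormedSpace ℝ E]
    [NormedAddCommGroup F] [NormedSpace ℝ F] {n : WithTop ℕ∞} {f : ℝ → ℝ} {I : Set ℝ}
    (hf : ContDiffOn ℝ n f I) :
    ContDiffOn ℝ n (fun g : E × F × ℝ => f g.2.2) (univ ×ˢ univ ×ˢ I) :=
  hf.comp (contDiff_snd.comp contDiff_snd).contDiffOn fun _ hg => hg.2.2

section strip

variable {G : ℝ → ℝ}

theorem one_le_pfun {g : ℝ × ℝ × ℝ} (hG' : 0 ≤ deriv G g.2.2) : 1 ≤ pfun G g :=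
  le_add_of_nonneg_right (mul_nonneg (by positivity) hG')

theorem pfun_le_Wfun (g : ℝ × ℝ × ℝ) : pfun G g ≤ Wfun G g :=
  (le_abs_self _).trans (abs_le_sqrt (le_add_of_nonneg_right (sq_nonneg _)))

theorem contDiffOn_pfun {n : WithTop ℕ∞} {I : Set ℝ} (hG : ContDiffOn ℝ n (deriv G) I) :
    ContDiffOn ℝ n (pfun G) (univ ×ˢ univ ×ˢ I) :=
  contDiffOn_const.add
    ((by fun_prop : ContDiff ℝ n fun g : ℝ × ℝ × ℝ => g.2.1 ^ 2 / 2).contDiffOn.mul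
      hG.comp_snd_snd)

theorem contDiffOn_qfun {n : WithTop ℕ∞} {I : Set ℝ} (hG : ContDiffOn ℝ n G I)
    (hG' : ContDiffOn ℝ n (deriv G) I) : ContDiffOn ℝ n (qfun G) (univ ×ˢ univ ×ˢ I) :=
  hG.comp_snd_snd.neg.sub
    ((by fun_prop : ContDiff ℝ n fun g : ℝ × ℝ × ℝ => g.1 * g.2.1 / 2).contDiffOn.mul
      hG'.comp_snd_snd)

theorem hasDerivAt_pfun_slice_t {x y t : ℝ} (hG : DifferentiableAt ℝ (deriv G) t) :
    HasDerivAt (fun t' => pfun G (x, y, t')) (y ^ 2 / 2 * deriv (deriv G) t) t :=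
  (hG.hasDerivAt.const_mul (y ^ 2 / 2)).const_add 1

theorem hasDerivAt_qfun_slice_t {x y t : ℝ} (hG : DifferentiableAt ℝ G t)
    (hG' : DifferentiableAt ℝ (deriv G) t) :
    HasDerivAt (fun t' => qfun G (x, y, t')) (-deriv G t - x * y / 2 * deriv (deriv G) t) t :=
  hG.hasDerivAt.neg.sub (hG'.hasDerivAt.const_mul (x * y / 2))

theorem X1op_pfun {x y t : ℝ} (hG : DifferentiableAt ℝ (deriv G) t) :
    X1op (pfun G) (x, y, t) = -(y ^ 3 / 4 * deriv (deriv G) t) := by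
  have hx : HasDerivAt (fun x' => pfun G (x', y, t)) 0 x := hasDerivAt_const x (pfun G (x, y, t))
  rw [X1op, dX, dT, hx.deriv, (hasDerivAt_pfun_slice_t hG).deriv]
  ring

theorem X2op_pfun {x y t : ℝ} (hG : DifferentiableAt ℝ (deriv G) t) :
    X2op (pfun G) (x, y, t) = y * deriv G t + x * y ^ 2 / 4 * deriv (deriv G) t := by
  have hy : HasDerivAt (fun y' => pfun G (x, y', t)) (y * deriv G t) y :=
    ((((hasDerivAt_pow 2 y).div_const 2).mul_const (deriv G t)).const_add 1).congr_deriv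
      (by push_cast; ring)
  rw [X2op, dYc, dT, hy.deriv, (hasDerivAt_pfun_slice_t hG).deriv]
  ring

theorem X1op_qfun {x y t : ℝ} (hG : DifferentiableAt ℝ G t)
    (hG' : DifferentiableAt ℝ (deriv G) t) :
    X1op (qfun G) (x, y, t) = x * y ^ 2 / 4 * deriv (deriv G) t := by
  have hx : HasDerivAt (fun x' => qfun G (x', y, t)) (-(y / 2 * deriv G t)) x :=
    ((((hasDerivAt_id' x).mul_const y).div_const 2).mul_const (deriv G t)).const_sub (-G t)
      |>.congr_deriv (by ring)
  rw [X1op, dX, dT, hx.deriv, (hasDerivAt_qfun_slice_t hG hG').deriv]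
  ring

theorem X2op_qfun {x y t : ℝ} (hG : DifferentiableAt ℝ G t)
    (hG' : DifferentiableAt ℝ (deriv G) t) :
    X2op (qfun G) (x, y, t) = -(x * deriv G t) - x ^ 2 * y / 4 * deriv (deriv G) t := by
  have hy : HasDerivAt (fun y' => qfun G (x, y', t)) (-(x / 2 * deriv G t)) y :=
    ((((hasDerivAt_id' y).const_mul x).div_const 2).mul_const (deriv G t)).const_sub (-G t)
      |>.congr_deriv (by ring)
  rw [X2op, dYc, dT, hy.deriv, (hasDerivAt_qfun_slice_t hG hG').deriv]
  ring

theorem meanCurvatureNumerator_strip_eq_zero {y t : ℝ} (hG : DifferentiableAt ℝ G t)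
    (hG' : DifferentiableAt ℝ (deriv G) t) :
    meanCurvatureNumerator (pfun G) (qfun G) (y * G t, y, t) = 0 := by
  rw [meanCurvatureNumerator, X1op_pfun hG', X2op_pfun hG', X1op_qfun hG hG', X2op_qfun hG hG']
  simp only [pfun, qfun]
  ring

end strip

theorem stmt1_general (I : Set ℝ) (hIo : IsOpen I)
    (G : ℝ → ℝ) (hG : ContDiffOn ℝ 2 G I) (hG' : ∀ t ∈ I, 0 ≤ deriv G t) :
    (∀ g : ℝ × ℝ × ℝ, g.2.2 ∈ I → 1 ≤ pfun G g ∧ pfun G g ≤ Wfun G g) ∧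
    ContDiffOn ℝ 1 (fun g => pfun G g / Wfun G g)
      ((Set.univ ×ˢ Set.univ ×ˢ I : Set (ℝ × ℝ × ℝ))) ∧
    ContDiffOn ℝ 1 (fun g => qfun G g / Wfun G g)
      ((Set.univ ×ˢ Set.univ ×ˢ I : Set (ℝ × ℝ × ℝ))) ∧
    ∀ y : ℝ, ∀ t ∈ I,
      X1op (fun g => pfun G g / Wfun G g) (y * G t, y, t)
        + X2op (fun g => qfun G g / Wfun G g) (y * G t, y, t) = 0 := by
  have hG₁ : ContDiffOn ℝ 1 G I := hG.of_le (by norm_num)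
  have hG'₁ : ContDiffOn ℝ 1 (deriv G) I := hG.deriv_of_isOpen hIo (by norm_num)
  have hp := contDiffOn_pfun hG'₁
  have hq := contDiffOn_qfun hG₁ hG'₁
  have hpos : ∀ g ∈ univ ×ˢ univ ×ˢ I, 0 < pfun G g ^ 2 + qfun G g ^ 2 := fun g hg => by
    nlinarith [one_le_pfun (hG' _ hg.2.2), sq_nonneg (qfun G g)]
  refine ⟨fun g hg => ⟨one_le_pfun (hG' _ hg), pfun_le_Wfun g⟩,
    hp.div_sqrt_sq_add_sq hp hq fun g hg => (hpos g hg).ne',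
    hq.div_sqrt_sq_add_sq hp hq fun g hg => (hpos g hg).ne', fun y t ht => ?_⟩
  have hmem : (y * G t, y, t) ∈ univ ×ˢ univ ×ˢ I := ⟨trivial, trivial, ht⟩
  have hU : univ ×ˢ univ ×ˢ I ∈ nhds (y * G t, y, t) :=
    (isOpen_univ.prod (isOpen_univ.prod hIo)).mem_nhds hmem
  have hI : I ∈ nhds t := hIo.mem_nhds ht
  unfold Wfun
  rw [X1op_add_X2op_div_sqrt ((hp.contDiffAt hU).differentiableAt one_ne_zero)
    ((hq.contDiffAt hU).differentiableAt one_ne_zero) (hpos _ hmem),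
    meanCurvatureNumerator_strip_eq_zero ((hG₁.contDiffAt hI).differentiableAt one_ne_zero)
      ((hG'₁.contDiffAt hI).differentiableAt one_ne_zero), zero_div]

/-- On `ℝ×ℝ×I` one has `W ≥ p ≥ 1`, so `p/W` and `q/W` are C¹ there, and at
every point of the graphical strip `x = yG(t)` one has `X1(p/W) + X2(q/W) = 0`:
every graphical strip is H-minimal. -/
theorem stmt1 (I : Set ℝ) (hIo : IsOpen I) (hIc : I.OrdConnected)
    (G : ℝ → ℝ) (hG : ContDiffOn ℝ 2 G I) (hG' : ∀ t ∈ I, 0 ≤ deriv G t) :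
    (∀ g : ℝ × ℝ × ℝ, g.2.2 ∈ I → 1 ≤ pfun G g ∧ pfun G g ≤ Wfun G g) ∧
    ContDiffOn ℝ 1 (fun g => pfun G g / Wfun G g)
      ((Set.univ ×ˢ Set.univ ×ˢ I : Set (ℝ × ℝ × ℝ))) ∧
    ContDiffOn ℝ 1 (fun g => qfun G g / Wfun G g)
      ((Set.univ ×ˢ Set.univ ×ˢ I : Set (ℝ × ℝ × ℝ))) ∧
    ∀ y : ℝ, ∀ t ∈ I,
      X1op (fun g => pfun G g / Wfun G g) (y * G t, y, t)
        + X2op (fun g => qfun G g / Wfun G g) (y * G t, y, t) = 0 :=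
  stmt1_general I hIo G hG hG'
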